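/- Let f : Fin M → ℝ^N with indices partitioned into K pairwise disjoint pools I_1, …, I_K, and let P₂ : ℝ^N → ℝ^K be the ℓ² pooling operator (P₂ x)_k = (∑_{j∈I_k} ⟨x, f_j⟩²)^{1/2}. Then for all x, x' ∈ ℝ^N, ‖P₂(x) − P₂(x')‖₂ ≤ λ₊(F) · d(x,x'), where λ₊(F) is the upper frame bound of f and d(x,x') = min(‖x − x'‖, ‖x + x'‖). -/

import Mathlib

open scoped BigOperators RealInnerProductSpace
open Finset

noncomputable section

/-- Upper frame bound of the family `f`. -/
def upperFrameBound {N M : ℕ} (f : Fin M → EuclideanSpace ℝ (Fin N)) : ℝ :=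
  sInf {C : ℝ | 0 ≤ C ∧ ∀ x : EuclideanSpace ℝ (Fin N),
    Real.sqrt (∑ i, ⟪x, f i⟫ ^ 2) ≤ C * ‖x‖}

/-- Sign-invariant distance `d(x,x') = min(‖x−x'‖, ‖x+x'‖)`. -/
def sdist {N : ℕ} (x x' : EuclideanSpace ℝ (Fin N)) : ℝ :=
  min ‖x - x'‖ ‖x + x'‖

/-- The ℓ² pooling operator: `(P₂ x)_k = (∑_{j∈I_k} ⟨x, f_j⟩²)^{1/2}`. -/
def pool2 {N M K : ℕ} (f : Fin M → EuclideanSpace ℝ (Fin N))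
    (I : Fin K → Finset (Fin M)) (x : EuclideanSpace ℝ (Fin N)) : Fin K → ℝ :=
  fun k => Real.sqrt (∑ j ∈ I k, ⟪x, f j⟫ ^ 2)

/-! Within one pool, `P₂` takes the ℓ² norm of the analysis coefficients `⟪x, f j⟫`, so the
reverse triangle inequality bounds each pooled difference by the ℓ² norm of the coefficient
differences over that pool. Summing over disjoint pools gives at most `‖T (x - x')‖ ≤ λ₊ ‖x - x'‖`,
where `T` is the analysis operator, whose operator norm is exactly `λ₊`. As `P₂ (-x') = P₂ x'`,
the same bound holds with `x + x'`. -/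

open Function

section FrameAnalysis

variable {ι E : Type*} [Fintype ι] [NormedAddCommGroup E] [InnerProductSpace ℝ E]

def frameAnalysis (f : ι → E) : E →L[ℝ] EuclideanSpace ℝ ι :=
  (EuclideanSpace.equiv ι ℝ).symm.toContinuousLinearMap.comp
    (ContinuousLinearMap.pi fun i => innerSL ℝ (f i))

theorem norm_frameAnalysis_apply (f : ι → E) (x : E) :
    ‖frameAnalysis f x‖ = √(∑ i, ⟪x, f i⟫ ^ 2) := by
  simp [frameAnalysis, EuclideanSpace.norm_eq, real_inner_comm]

end FrameAnalysis

/-- `upperFrameBound` is literally the definition of the operator norm of the analysis operator. -/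
theorem upperFrameBound_eq_norm_frameAnalysis {N M : ℕ} (f : Fin M → EuclideanSpace ℝ (Fin N)) :
    upperFrameBound f = ‖frameAnalysis f‖ := by
  simp only [upperFrameBound, ContinuousLinearMap.norm_def, norm_frameAnalysis_apply]

theorem sqrt_sum_sq_le_upperFrameBound_mul_norm {N M : ℕ}
    (f : Fin M → EuclideanSpace ℝ (Fin N)) (x : EuclideanSpace ℝ (Fin N)) :
    √(∑ i, ⟪x, f i⟫ ^ 2) ≤ upperFrameBound f * ‖x‖ := by
  rw [upperFrameBound_eq_norm_frameAnalysis, ← norm_frameAnalysis_apply]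
  exact (frameAnalysis f).le_opNorm x

theorem upperFrameBound_nonneg {N M : ℕ} (f : Fin M → EuclideanSpace ℝ (Fin N)) :
    0 ≤ upperFrameBound f :=
  upperFrameBound_eq_norm_frameAnalysis f ▸ norm_nonneg _

/-- The reverse triangle inequality in `ℓ²(s)`, by Cauchy–Schwarz. -/
theorem Real.sq_sqrt_sum_sq_sub_sqrt_sum_sq_le {ι : Type*} (s : Finset ι) (a b : ι → ℝ) :
    (√(∑ i ∈ s, a i ^ 2) - √(∑ i ∈ s, b i ^ 2)) ^ 2 ≤ ∑ i ∈ s, (a i - b i) ^ 2 := by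
  have hA := Real.sq_sqrt (sum_nonneg fun i (_ : i ∈ s) => sq_nonneg (a i))
  have hB := Real.sq_sqrt (sum_nonneg fun i (_ : i ∈ s) => sq_nonneg (b i))
  have hexpand : ∑ i ∈ s, (a i - b i) ^ 2
      = ∑ i ∈ s, a i ^ 2 + ∑ i ∈ s, b i ^ 2 - 2 * ∑ i ∈ s, a i * b i := by
    simp only [sub_sq, sum_sub_distrib, sum_add_distrib, mul_sum, mul_assoc]
    ring
  nlinarith [Real.sum_mul_le_sqrt_mul_sqrt s a b]

theorem pool2_neg {N M K : ℕ} (f : Fin M → EuclideanSpace ℝ (Fin N))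
    (I : Fin K → Finset (Fin M)) (x : EuclideanSpace ℝ (Fin N)) :
    pool2 f I (-x) = pool2 f I x := by
  funext k
  simp [pool2, inner_neg_left]

theorem sum_pool2_sub_sq_le {N M K : ℕ} (f : Fin M → EuclideanSpace ℝ (Fin N))
    (I : Fin K → Finset (Fin M)) (hdisj : Pairwise (Disjoint on I))
    (x x' : EuclideanSpace ℝ (Fin N)) :
    ∑ k, (pool2 f I x k - pool2 f I x' k) ^ 2 ≤ ∑ j, ⟪x - x', f j⟫ ^ 2 :=
  calc ∑ k, (pool2 f I x k - pool2 f I x' k) ^ 2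
      ≤ ∑ k, ∑ j ∈ I k, ⟪x - x', f j⟫ ^ 2 := sum_le_sum fun k _ => by
        simpa only [pool2, inner_sub_left] using
          Real.sq_sqrt_sum_sq_sub_sqrt_sum_sq_le (I k) (fun j => ⟪x, f j⟫) (fun j => ⟪x', f j⟫)
    _ = ∑ j ∈ univ.biUnion I, ⟪x - x', f j⟫ ^ 2 :=
        (sum_biUnion fun k _ k' _ hkk' => hdisj hkk').symm
    _ ≤ ∑ j, ⟪x - x', f j⟫ ^ 2 := sum_le_univ_sum_of_nonneg fun j => sq_nonneg _

theorem sqrt_sum_pool2_sub_sq_le {N M K : ℕ} (f : Fin M → EuclideanSpace ℝ (Fin N))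
    (I : Fin K → Finset (Fin M)) (hdisj : Pairwise (Disjoint on I))
    (x x' : EuclideanSpace ℝ (Fin N)) :
    √(∑ k, (pool2 f I x k - pool2 f I x' k) ^ 2) ≤ upperFrameBound f * ‖x - x'‖ :=
  (Real.sqrt_le_sqrt (sum_pool2_sub_sq_le f I hdisj x x')).trans
    (sqrt_sum_sq_le_upperFrameBound_mul_norm f (x - x'))

theorem pool2_upper_lipschitz_general {N M K : ℕ} (f : Fin M → EuclideanSpace ℝ (Fin N))
    (I : Fin K → Finset (Fin M))
    (hdisj : ∀ k k', k ≠ k' → Disjoint (I k) (I k')) :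
    ∀ x x' : EuclideanSpace ℝ (Fin N),
      Real.sqrt (∑ k, (pool2 f I x k - pool2 f I x' k) ^ 2)
        ≤ upperFrameBound f * sdist x x' := by
  intro x x'
  have hdisj' : Pairwise (Disjoint on I) := fun k k' hkk' => hdisj k k' hkk'
  have hminus := sqrt_sum_pool2_sub_sq_le f I hdisj' x x'
  have hplus := sqrt_sum_pool2_sub_sq_le f I hdisj' x (-x')
  rw [pool2_neg, sub_neg_eq_add] at hplus
  rw [sdist, mul_min_of_nonneg _ _ (upperFrameBound_nonneg f)]
  exact le_min hminus hplus

/-- upper Lipschitz bound `‖P₂(x) − P₂(x')‖₂ ≤ λ₊(F)·d(x,x')` for ℓ² pooling. -/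
theorem pool2_upper_lipschitz {N M K : ℕ} (f : Fin M → EuclideanSpace ℝ (Fin N))
    (I : Fin K → Finset (Fin M))
    (hdisj : ∀ k k', k ≠ k' → Disjoint (I k) (I k'))
    (hcover : ∀ j : Fin M, ∃ k, j ∈ I k) :
    ∀ x x' : EuclideanSpace ℝ (Fin N),
      Real.sqrt (∑ k, (pool2 f I x k - pool2 f I x' k) ^ 2)
        ≤ upperFrameBound f * sdist x x' :=
  pool2_upper_lipschitz_general f I hdisj
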